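/- Let 0 < q₁ < p₁ ≤ 1, 0 < q₂ < p₂ ≤ 1, let n, m ≥ 1, and let f : [0,1]² → ℝ be continuous. Then for every (x,y) ∈ [0,1]², |B_{n,m}(f;x,y) - f(x,y)| ≤ 2 K(f, δ_{n,m}(x,y)/2), where δ_{n,m}(x,y) = (1/2) max( (p₁^{n-1}/[n]_{p₁,q₁})(x - x²), (p₂^{m-1}/[m]_{p₂,q₂})(y - y²) ) and K is the Peetre K-functional defined in the context. -/

import Mathlib

open Finset Set Filter Topology

/-- The (p,q)-integer `[n]_{p,q} = ∑_{i=0}^{n-1} p^(n-1-i) q^i`. -/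
noncomputable def pqInt (p q : ℝ) (n : ℕ) : ℝ :=
  ∑ i ∈ Finset.range n, p ^ (n - 1 - i) * q ^ i

/-- The (p,q)-factorial `[n]_{p,q}! = ∏_{j=1}^n [j]_{p,q}`. -/
noncomputable def pqFactorial (p q : ℝ) (n : ℕ) : ℝ :=
  ∏ j ∈ Finset.range n, pqInt p q (j + 1)

/-- The (p,q)-binomial coefficient. -/
noncomputable def pqChoose (p q : ℝ) (n k : ℕ) : ℝ :=
  pqFactorial p q n / (pqFactorial p q k * pqFactorial p q (n - k))

/-- The node `p^(n-k) [k]_{p,q} / [n]_{p,q}` of the (p,q)-Bernstein operator. -/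
noncomputable def pqNode (p q : ℝ) (n k : ℕ) : ℝ :=
  p ^ (n - k) * pqInt p q k / pqInt p q n

/-- The basis function
`p^((k(k-1)-n(n-1))/2) C(n,k)_{p,q} x^k ∏_{s=0}^{n-k-1} (p^s - q^s x)`,
where `p^((k(k-1)-n(n-1))/2)` is written as `p^(k(k-1)/2) / p^(n(n-1)/2)`. -/
noncomputable def pqBasis (p q : ℝ) (n k : ℕ) (x : ℝ) : ℝ :=
  (p ^ (k.choose 2) / p ^ (n.choose 2)) * pqChoose p q n k * x ^ k *
    ∏ s ∈ Finset.range (n - k), (p ^ s - q ^ s * x)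

/-- The (p,q)-Bernstein operator `B_{n,p,q}(f;x)`. -/
noncomputable def pqBernstein (p q : ℝ) (n : ℕ) (f : ℝ → ℝ) (x : ℝ) : ℝ :=
  ∑ k ∈ Finset.range (n + 1), pqBasis p q n k x * f (pqNode p q n k)

/-- The bivariate (p,q)-Bernstein operator
`B_{n,m}^{(p₁,q₁),(p₂,q₂)}(f;x,y)`. -/
noncomputable def pqBernstein2 (p₁ q₁ p₂ q₂ : ℝ) (n m : ℕ)
    (f : ℝ → ℝ → ℝ) (x y : ℝ) : ℝ :=
  ∑ k ∈ Finset.range (n + 1), ∑ j ∈ Finset.range (m + 1),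
    pqBasis p₁ q₁ n k x * pqBasis p₂ q₂ m j y *
      f (pqNode p₁ q₁ n k) (pqNode p₂ q₂ m j)

/-- The partial derivative with respect to the first variable. -/
noncomputable def pdx (g : ℝ → ℝ → ℝ) : ℝ → ℝ → ℝ :=
  fun x y => deriv (fun u => g u y) x

/-- The partial derivative with respect to the second variable. -/
noncomputable def pdy (g : ℝ → ℝ → ℝ) : ℝ → ℝ → ℝ :=
  fun x y => deriv (fun v => g x v) y

/-- The supremum norm of a bivariate function over `[0,1]²`. -/
noncomputable def supNorm2 (g : ℝ → ℝ → ℝ) : ℝ :=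
  sSup {d : ℝ | ∃ x ∈ Set.Icc (0 : ℝ) 1, ∃ y ∈ Set.Icc (0 : ℝ) 1, d = |g x y|}

/-- Membership in `C²([0,1]²)`: the function and its pure partial derivatives of
order one and two exist and are continuous on `[0,1]²`. -/
def IsC2On01 (g : ℝ → ℝ → ℝ) : Prop :=
  ContinuousOn (fun z : ℝ × ℝ => g z.1 z.2) (Set.Icc (0 : ℝ) 1 ×ˢ Set.Icc (0 : ℝ) 1) ∧
  (∀ x ∈ Set.Icc (0 : ℝ) 1, ∀ y ∈ Set.Icc (0 : ℝ) 1,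
    DifferentiableAt ℝ (fun u => g u y) x ∧
    DifferentiableAt ℝ (fun u => pdx g u y) x ∧
    DifferentiableAt ℝ (fun v => g x v) y ∧
    DifferentiableAt ℝ (fun v => pdy g x v) y) ∧
  ContinuousOn (fun z : ℝ × ℝ => pdx g z.1 z.2) (Set.Icc (0 : ℝ) 1 ×ˢ Set.Icc (0 : ℝ) 1) ∧
  ContinuousOn (fun z : ℝ × ℝ => pdy g z.1 z.2) (Set.Icc (0 : ℝ) 1 ×ˢ Set.Icc (0 : ℝ) 1) ∧
  ContinuousOn (fun z : ℝ × ℝ => pdx (pdx g) z.1 z.2)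
    (Set.Icc (0 : ℝ) 1 ×ˢ Set.Icc (0 : ℝ) 1) ∧
  ContinuousOn (fun z : ℝ × ℝ => pdy (pdy g) z.1 z.2)
    (Set.Icc (0 : ℝ) 1 ×ˢ Set.Icc (0 : ℝ) 1)

/-- The `C²` norm `‖g‖_∞ + ∑_{j=1}^2 (‖∂ʲg/∂xʲ‖_∞ + ‖∂ʲg/∂yʲ‖_∞)`. -/
noncomputable def C2Norm (g : ℝ → ℝ → ℝ) : ℝ :=
  supNorm2 g + (supNorm2 (pdx g) + supNorm2 (pdy g)) +
    (supNorm2 (pdx (pdx g)) + supNorm2 (pdy (pdy g)))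

/-- The Peetre K-functional. -/
noncomputable def peetreK (f : ℝ → ℝ → ℝ) (δ : ℝ) : ℝ :=
  sInf {d : ℝ | ∃ g : ℝ → ℝ → ℝ, IsC2On01 g ∧
    d = supNorm2 (fun x y => f x y - g x y) + δ * C2Norm g}

/-!
`pqBernstein2` is the tensor product of two univariate positive operators that reproduce affine
functions and have second central moment `p^(n-1)/[n] (x - x²)`; these moments follow from a
Pascal-type recursion of the basis in `n`, along which the partition of unity telescopes.
For `g ∈ C²`, a second-order Taylor expansion in each variable in turn then bounds
`|B g - g|` by `(‖g_xx‖ δ₁ + ‖g_yy‖ δ₂) / 2`, with `δ₁, δ₂` the two central moments, while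
`|B (f - g) - (f - g)| ≤ 2 ‖f - g‖`.
Taking the infimum over `g` gives the bound by the K-functional.
-/

section PQArith

variable {p q : ℝ}

lemma pqInt_zero (p q : ℝ) : pqInt p q 0 = 0 := by simp [pqInt]

lemma pqInt_succ (p q : ℝ) (n : ℕ) : pqInt p q (n + 1) = p * pqInt p q n + q ^ n := by
  rw [pqInt, sum_range_succ, pqInt, mul_sum, Nat.add_sub_cancel, Nat.sub_self, pow_zero, one_mul]
  congr 1
  refine sum_congr rfl fun i hi => ?_
  rw [show n - i = n - 1 - i + 1 by have := mem_range.mp hi; omega, pow_succ]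
  ring

lemma pqInt_add (p q : ℝ) (a b : ℕ) :
    pqInt p q (a + b) = p ^ b * pqInt p q a + q ^ a * pqInt p q b := by
  induction b with
  | zero => simp [pqInt_zero]
  | succ b ih =>
    rw [← add_assoc, pqInt_succ, ih, pqInt_succ, pow_succ, pow_add]
    ring

lemma pqInt_succ' (p q : ℝ) (n : ℕ) : pqInt p q (n + 1) = p ^ n + q * pqInt p q n := by
  simpa [pqInt, add_comm n 1] using pqInt_add p q 1 n

lemma pqInt_nonneg (hp : 0 ≤ p) (hq : 0 ≤ q) (n : ℕ) : 0 ≤ pqInt p q n := by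
  unfold pqInt
  positivity

lemma pqInt_pos (hp : 0 < p) (hq : 0 ≤ q) {n : ℕ} (hn : n ≠ 0) : 0 < pqInt p q n := by
  obtain ⟨n, rfl⟩ := Nat.exists_eq_succ_of_ne_zero hn
  rw [pqInt_succ']
  have := pqInt_nonneg hp.le hq n
  positivity

lemma pqFactorial_zero (p q : ℝ) : pqFactorial p q 0 = 1 := by simp [pqFactorial]

lemma pqFactorial_succ (p q : ℝ) (n : ℕ) :
    pqFactorial p q (n + 1) = pqFactorial p q n * pqInt p q (n + 1) :=
  prod_range_succ _ _

lemma pqFactorial_pos (hp : 0 < p) (hq : 0 ≤ q) (n : ℕ) : 0 < pqFactorial p q n :=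
  prod_pos fun _ _ => pqInt_pos hp hq (Nat.succ_ne_zero _)

lemma pqChoose_zero_right (hp : 0 < p) (hq : 0 ≤ q) (n : ℕ) : pqChoose p q n 0 = 1 := by
  rw [pqChoose, pqFactorial_zero, one_mul, Nat.sub_zero, div_self (pqFactorial_pos hp hq n).ne']

lemma pqChoose_self (hp : 0 < p) (hq : 0 ≤ q) (n : ℕ) : pqChoose p q n n = 1 := by
  rw [pqChoose, Nat.sub_self, pqFactorial_zero, mul_one, div_self (pqFactorial_pos hp hq n).ne']

lemma pqChoose_nonneg (hp : 0 < p) (hq : 0 ≤ q) (n k : ℕ) : 0 ≤ pqChoose p q n k := by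
  have := pqFactorial_pos hp hq
  unfold pqChoose
  exact div_nonneg (this n).le (mul_pos (this k) (this (n - k))).le

lemma pqChoose_succ_succ (hp : 0 < p) (hq : 0 ≤ q) {n k : ℕ} (hk : k < n) :
    pqChoose p q (n + 1) (k + 1) =
      p ^ (k + 1) * pqChoose p q n (k + 1) + q ^ (n - k) * pqChoose p q n k := by
  obtain ⟨r, rfl⟩ := Nat.exists_eq_add_of_lt hk
  have hsplit := pqInt_add p q (r + 1) (k + 1)
  rw [show r + 1 + (k + 1) = k + r + 1 + 1 by omega] at hsplit
  simp only [pqChoose, show k + r + 1 + 1 - (k + 1) = r + 1 by omega,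
    show k + r + 1 - (k + 1) = r by omega, show k + r + 1 - k = r + 1 by omega,
    pqFactorial_succ p q (k + r + 1), pqFactorial_succ p q k, pqFactorial_succ p q r, hsplit]
  have := (pqInt_pos hp hq (Nat.succ_ne_zero k)).ne'
  have := (pqInt_pos hp hq (Nat.succ_ne_zero r)).ne'
  have := fun j => (pqFactorial_pos hp hq j).ne'
  field_simp

lemma pqChoose_succ_succ_mul_pqInt (hp : 0 < p) (hq : 0 ≤ q) (n k : ℕ) :
    pqChoose p q (n + 1) (k + 1) * pqInt p q (k + 1) = pqInt p q (n + 1) * pqChoose p q n k := by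
  simp only [pqChoose, Nat.add_sub_add_right, pqFactorial_succ]
  have := (pqInt_pos hp hq (Nat.succ_ne_zero k)).ne'
  have := fun j => (pqFactorial_pos hp hq j).ne'
  field_simp

end PQArith

lemma pow_choose_two_succ (p : ℝ) (k : ℕ) : p ^ (k + 1).choose 2 = p ^ k.choose 2 * p ^ k := by
  rw [Nat.choose_succ_succ', Nat.choose_one_right, pow_add, mul_comm]

section PQBasis

variable {p q : ℝ}

/-- The telescoping term of the Pascal-type recursion of `pqBasis` in `n`
(see `pqBasis_succ_succ`). -/
noncomputable def pqBasisCarry (p q : ℝ) (n k : ℕ) (x : ℝ) : ℝ :=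
  pqBasis p q n k x * p ^ k * q ^ (n - k) * x / p ^ n

lemma pqBasis_succ_zero (hp : 0 < p) (hq : 0 ≤ q) (n : ℕ) (x : ℝ) :
    pqBasis p q (n + 1) 0 x = pqBasis p q n 0 x - pqBasisCarry p q n 0 x := by
  simp only [pqBasisCarry, pqBasis, pqChoose_zero_right hp hq, Nat.sub_zero, prod_range_succ,
    pow_choose_two_succ]
  generalize ∏ s ∈ range n, (p ^ s - q ^ s * x) = P
  field_simp

lemma pqBasis_succ_self (hp : 0 < p) (hq : 0 ≤ q) (n : ℕ) (x : ℝ) :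
    pqBasis p q (n + 1) (n + 1) x = pqBasisCarry p q n n x := by
  simp only [pqBasisCarry, pqBasis, pqChoose_self hp hq, Nat.sub_self, prod_range_zero]
  field_simp
  ring

lemma pqBasis_succ_succ (hp : 0 < p) (hq : 0 ≤ q) {n k : ℕ} (hk : k < n) (x : ℝ) :
    pqBasis p q (n + 1) (k + 1) x =
      pqBasis p q n (k + 1) x - (pqBasisCarry p q n (k + 1) x - pqBasisCarry p q n k x) := by
  obtain ⟨r, rfl⟩ := Nat.exists_eq_add_of_lt hk
  simp only [pqBasisCarry, pqBasis, pqChoose_succ_succ hp hq hk,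
    show k + r + 1 + 1 - (k + 1) = r + 1 by omega, show k + r + 1 - (k + 1) = r by omega,
    show k + r + 1 - k = r + 1 by omega, prod_range_succ, pow_choose_two_succ]
  generalize ∏ s ∈ range r, (p ^ s - q ^ s * x) = P
  field_simp
  ring

theorem sum_pqBasis (hp : 0 < p) (hq : 0 ≤ q) (n : ℕ) (x : ℝ) :
    ∑ k ∈ range (n + 1), pqBasis p q n k x = 1 := by
  induction n with
  | zero => simp [pqBasis, pqChoose_self hp hq]
  | succ n ih =>
    rw [sum_range_succ, sum_range_succ', sum_congr rfl fun k hk =>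
      pqBasis_succ_succ hp hq (mem_range.mp hk) x, sum_sub_distrib, sum_range_sub (fun k => pqBasisCarry p q n k x),
      pqBasis_succ_zero hp hq, pqBasis_succ_self hp hq, ← ih, sum_range_succ']
    ring

end PQBasis

section PQMoments

variable {p q : ℝ}

lemma pqBasis_succ_succ_mul (hp : 0 < p) (hq : 0 ≤ q) {n k : ℕ} (hk : k ≤ n) (x : ℝ) :
    pqBasis p q (n + 1) (k + 1) x * (p ^ (n - k) * pqInt p q (k + 1)) =
      pqInt p q (n + 1) * x * pqBasis p q n k x := by
  have hchoose := eq_div_of_mul_eq (pqInt_pos hp hq (Nat.succ_ne_zero k)).ne'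
    (pqChoose_succ_succ_mul_pqInt hp hq n k)
  have hpow : p ^ k * p ^ (n - k) = p ^ n := by rw [← pow_add, Nat.add_sub_cancel' hk]
  simp only [pqBasis, Nat.add_sub_add_right, pow_choose_two_succ, hchoose, ← hpow]
  generalize ∏ s ∈ range (n - k), (p ^ s - q ^ s * x) = P
  have := (pqInt_pos hp hq (Nat.succ_ne_zero k)).ne'
  field_simp
  ring

theorem sum_pqBasis_mul (hp : 0 < p) (hq : 0 ≤ q) (n : ℕ) (x : ℝ) :
    ∑ k ∈ range (n + 1), pqBasis p q n k x * (p ^ (n - k) * pqInt p q k) = pqInt p q n * x := by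
  cases n with
  | zero => simp [pqInt_zero]
  | succ n =>
    rw [sum_range_succ', pqInt_zero, mul_zero, mul_zero, add_zero]
    simp only [Nat.add_sub_add_right]
    rw [sum_congr rfl fun k hk => pqBasis_succ_succ_mul hp hq (Nat.lt_succ_iff.mp (mem_range.mp hk)) x,
      ← mul_sum, sum_pqBasis hp hq, mul_one]

theorem sum_pqBasis_mul_sq (hp : 0 < p) (hq : 0 ≤ q) (n : ℕ) (x : ℝ) :
    ∑ k ∈ range (n + 2), pqBasis p q (n + 1) k x * (p ^ (n + 1 - k) * pqInt p q k) ^ 2 =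
      pqInt p q (n + 1) * x * (p ^ n + q * (pqInt p q n * x)) := by
  have hterm : ∀ k ∈ range (n + 1),
      pqBasis p q (n + 1) (k + 1) x * (p ^ (n - k) * pqInt p q (k + 1)) ^ 2 =
        pqInt p q (n + 1) * x *
          (p ^ n * pqBasis p q n k x + q * (pqBasis p q n k x * (p ^ (n - k) * pqInt p q k))) := by
    intro k hk
    have hk : k ≤ n := Nat.lt_succ_iff.mp (mem_range.mp hk)
    have hpow : p ^ k * p ^ (n - k) = p ^ n := by rw [← pow_add, Nat.add_sub_cancel' hk]
    rw [sq, ← mul_assoc, pqBasis_succ_succ_mul hp hq hk, pqInt_succ' p q k, ← hpow]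
    ring
  rw [sum_range_succ', pqInt_zero]
  simp only [Nat.add_sub_add_right]
  rw [sum_congr rfl hterm, ← mul_sum, sum_add_distrib, ← mul_sum, ← mul_sum, sum_pqBasis hp hq,
    sum_pqBasis_mul hp hq]
  ring

theorem sum_pqBasis_mul_pqNode (hp : 0 < p) (hq : 0 ≤ q) {n : ℕ} (hn : n ≠ 0) (x : ℝ) :
    ∑ k ∈ range (n + 1), pqBasis p q n k x * pqNode p q n k = x := by
  simp only [pqNode, mul_div_assoc', ← sum_div, sum_pqBasis_mul hp hq]
  exact mul_div_cancel_left₀ x (pqInt_pos hp hq hn).ne'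

theorem sum_pqBasis_mul_pqNode_sub_sq (hp : 0 < p) (hq : 0 ≤ q) {n : ℕ} (hn : n ≠ 0) (x : ℝ) :
    ∑ k ∈ range (n + 1), pqBasis p q n k x * (pqNode p q n k - x) ^ 2 =
      p ^ (n - 1) / pqInt p q n * (x - x ^ 2) := by
  obtain ⟨n, rfl⟩ := Nat.exists_eq_succ_of_ne_zero hn
  have hN := (pqInt_pos hp hq hn).ne'
  have hexpand : ∀ k, pqBasis p q (n + 1) k x * (pqNode p q (n + 1) k - x) ^ 2 =
      pqBasis p q (n + 1) k x * (p ^ (n + 1 - k) * pqInt p q k) ^ 2 / pqInt p q (n + 1) ^ 2 -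
        2 * x / pqInt p q (n + 1) *
          (pqBasis p q (n + 1) k x * (p ^ (n + 1 - k) * pqInt p q k)) +
        x ^ 2 * pqBasis p q (n + 1) k x := fun k => by
    rw [pqNode]
    field_simp
    ring
  simp only [hexpand, sum_add_distrib, sum_sub_distrib, ← sum_div, ← mul_sum,
    sum_pqBasis_mul_sq hp hq, sum_pqBasis_mul hp hq, sum_pqBasis hp hq]
  rw [Nat.succ_sub_one]
  rw [pqInt_succ'] at hN ⊢
  field_simp
  ring

end PQMoments

section PQPositivity

variable {p q : ℝ}

lemma pqBasis_nonneg (hp : 0 < p) (hq : 0 ≤ q) (hqp : q ≤ p) (n k : ℕ) {x : ℝ}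
    (hx : x ∈ Icc (0 : ℝ) 1) : 0 ≤ pqBasis p q n k x := by
  have hfactor : ∀ s ∈ range (n - k), 0 ≤ p ^ s - q ^ s * x := fun s _ => by
    have : q ^ s * x ≤ q ^ s := mul_le_of_le_one_right (pow_nonneg hq s) hx.2
    linarith [pow_le_pow_left₀ hq hqp s]
  have := pqChoose_nonneg hp hq n k
  have := prod_nonneg hfactor
  have := hx.1
  unfold pqBasis
  positivity

lemma pqNode_mem_Icc (hp : 0 ≤ p) (hq : 0 ≤ q) {n k : ℕ} (hk : k ≤ n) :
    pqNode p q n k ∈ Icc (0 : ℝ) 1 := by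
  have hsplit := pqInt_add p q k (n - k)
  rw [Nat.add_sub_cancel' hk] at hsplit
  have := pqInt_nonneg hp hq
  refine ⟨div_nonneg (mul_nonneg (pow_nonneg hp _) (this k)) (this n),
    div_le_one_of_le₀ ?_ (this n)⟩
  linarith [mul_nonneg (pow_nonneg hq k) (this (n - k))]

end PQPositivity

section WeightedSum

variable {ι : Type*} {s : Finset ι} {w u : ι → ℝ}

lemma abs_sum_mul_le_sum_mul {B : ι → ℝ} (hw : ∀ i ∈ s, 0 ≤ w i) (hu : ∀ i ∈ s, |u i| ≤ B i) :
    |∑ i ∈ s, w i * u i| ≤ ∑ i ∈ s, w i * B i :=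
  (abs_sum_le_sum_abs _ _).trans <| sum_le_sum fun i hi => by
    rw [abs_mul, abs_of_nonneg (hw i hi)]
    exact mul_le_mul_of_nonneg_left (hu i hi) (hw i hi)

lemma abs_sum_mul_le (hw : ∀ i ∈ s, 0 ≤ w i) (hw1 : ∑ i ∈ s, w i = 1) {C : ℝ}
    (hu : ∀ i ∈ s, |u i| ≤ C) : |∑ i ∈ s, w i * u i| ≤ C := by
  simpa [← sum_mul, hw1] using abs_sum_mul_le_sum_mul (B := fun _ => C) hw hu

end WeightedSum

section Taylor

variable {h h' h'' : ℝ → ℝ} {M : ℝ}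

lemma abs_sub_sub_deriv_mul_le_of_le {a b : ℝ} (hab : a ≤ b)
    (hh : ∀ u ∈ Icc a b, HasDerivAt h (h' u) u) (hh' : ∀ u ∈ Icc a b, HasDerivAt h' (h'' u) u)
    (hM : ∀ u ∈ Icc a b, |h'' u| ≤ M) :
    |h b - h a - h' a * (b - a)| ≤ M / 2 * (b - a) ^ 2 := by
  have hrem : ∀ u ∈ Icc a b,
      HasDerivAt (fun v => h v - h a - h' a * (v - a)) (h' u - h' a) u := fun u hu => by
    exact (((hh u hu).sub_const (h a)).sub
      (((hasDerivAt_id u).sub_const a).const_mul (h' a))).congr_deriv (by ring)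
  have hbound : ∀ u, HasDerivAt (fun v => M / 2 * (v - a) ^ 2) (M * (u - a)) u := fun u => by
    exact ((((hasDerivAt_id u).sub_const a).pow 2).const_mul (M / 2)).congr_deriv (by
      simp
      ring)
  have hlip : ∀ u ∈ Icc a b, ‖h' u - h' a‖ ≤ M * (u - a) :=
    norm_image_sub_le_of_norm_deriv_le_segment' (fun u hu => (hh' u hu).hasDerivWithinAt)
      fun u hu => hM u (Ico_subset_Icc_self hu)
  exact image_norm_le_of_norm_deriv_right_le_deriv_boundary
    (fun u hu => (hrem u hu).continuousAt.continuousWithinAt)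
    (fun u hu => (hrem u (Ico_subset_Icc_self hu)).hasDerivWithinAt) (by simp) hbound
    (fun u hu => hlip u (Ico_subset_Icc_self hu)) (right_mem_Icc.mpr hab)

lemma abs_sub_sub_deriv_mul_le {s : Set ℝ} (hs : s.OrdConnected)
    (hh : ∀ u ∈ s, HasDerivAt h (h' u) u) (hh' : ∀ u ∈ s, HasDerivAt h' (h'' u) u)
    (hM : ∀ u ∈ s, |h'' u| ≤ M) {x t : ℝ} (hx : x ∈ s) (ht : t ∈ s) :
    |h t - h x - h' x * (t - x)| ≤ M / 2 * (t - x) ^ 2 := by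
  rcases le_total x t with hxt | htx
  · have hsub := hs.out hx ht
    exact abs_sub_sub_deriv_mul_le_of_le hxt (fun u hu => hh u (hsub hu))
      (fun u hu => hh' u (hsub hu)) fun u hu => hM u (hsub hu)
  · -- reflect `u ↦ -u` to reduce to the case `x ≤ t`
    have hsub : ∀ u ∈ Icc (-x) (-t), -u ∈ s := fun u hu =>
      hs.out ht hx ⟨le_neg_of_le_neg hu.2, neg_le_of_neg_le hu.1⟩
    have := abs_sub_sub_deriv_mul_le_of_le (h := fun u => h (-u)) (h' := fun u => -h' (-u))
      (h'' := fun u => h'' (-u)) (neg_le_neg htx)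
      (fun u hu => ((hh (-u) (hsub u hu)).comp u (hasDerivAt_neg u)).congr_deriv (by ring))
      (fun u hu => ((hh' (-u) (hsub u hu)).comp u (hasDerivAt_neg u)).neg.congr_deriv (by ring))
      fun u hu => hM (-u) (hsub u hu)
    simp only [neg_neg] at this
    convert this using 2 <;> ring

end Taylor

section SupNorm

lemma supNorm2_nonneg (g : ℝ → ℝ → ℝ) : 0 ≤ supNorm2 g :=
  Real.sSup_nonneg <| by
    rintro _ ⟨x, -, y, -, rfl⟩
    exact abs_nonneg _

lemma abs_le_supNorm2 {g : ℝ → ℝ → ℝ}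
    (hg : ContinuousOn (fun z : ℝ × ℝ => g z.1 z.2) (Icc (0 : ℝ) 1 ×ˢ Icc (0 : ℝ) 1))
    {x y : ℝ} (hx : x ∈ Icc (0 : ℝ) 1) (hy : y ∈ Icc (0 : ℝ) 1) : |g x y| ≤ supNorm2 g := by
  obtain ⟨C, hC⟩ := (isCompact_Icc.prod isCompact_Icc).exists_bound_of_continuousOn hg
  refine le_csSup ⟨C, ?_⟩ ⟨x, hx, y, hy, rfl⟩
  rintro _ ⟨a, ha, b, hb, rfl⟩
  exact hC (a, b) ⟨ha, hb⟩

lemma supNorm2_pdx_pdx_add_supNorm2_pdy_pdy_le_C2Norm (g : ℝ → ℝ → ℝ) :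
    supNorm2 (pdx (pdx g)) + supNorm2 (pdy (pdy g)) ≤ C2Norm g := by
  have := supNorm2_nonneg g
  have := supNorm2_nonneg (pdx g)
  have := supNorm2_nonneg (pdy g)
  unfold C2Norm
  linarith

end SupNorm

section PeetreK

lemma isC2On01_zero : IsC2On01 fun _ _ => 0 := by
  have hx : pdx (fun _ _ => (0 : ℝ)) = fun _ _ => 0 := by funext; simp [pdx]
  have hy : pdy (fun _ _ => (0 : ℝ)) = fun _ _ => 0 := by funext; simp [pdy]
  refine ⟨continuousOn_const, fun _ _ _ _ => ?_, ?_, ?_, ?_, ?_⟩ <;>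
    simp only [hx, hy, continuousOn_const, differentiableAt_const, and_self]

lemma le_peetreK {f : ℝ → ℝ → ℝ} {δ a : ℝ}
    (h : ∀ g, IsC2On01 g → a ≤ supNorm2 (fun x y => f x y - g x y) + δ * C2Norm g) :
    a ≤ peetreK f δ :=
  le_csInf ⟨_, 0, isC2On01_zero, rfl⟩ <| by
    rintro _ ⟨g, hg, rfl⟩
    exact h g hg

end PeetreK

section PQBernstein

variable {p q : ℝ}

lemma pqBernstein_sub (p q : ℝ) (n : ℕ) (φ ψ : ℝ → ℝ) (x : ℝ) :
    pqBernstein p q n (fun u => φ u - ψ u) x = pqBernstein p q n φ x - pqBernstein p q n ψ x := by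
  simp only [pqBernstein, mul_sub, sum_sub_distrib]

lemma abs_pqBernstein_le (hp : 0 < p) (hq : 0 ≤ q) (hqp : q ≤ p) (n : ℕ) {φ : ℝ → ℝ} {C x : ℝ}
    (hx : x ∈ Icc (0 : ℝ) 1) (hφ : ∀ u ∈ Icc (0 : ℝ) 1, |φ u| ≤ C) :
    |pqBernstein p q n φ x| ≤ C :=
  abs_sum_mul_le (fun k _ => pqBasis_nonneg hp hq hqp n k hx) (sum_pqBasis hp hq n x)
    fun _ hk => hφ _ (pqNode_mem_Icc hp.le hq (Nat.lt_succ_iff.mp (mem_range.mp hk)))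

theorem abs_pqBernstein_sub_le (hp : 0 < p) (hq : 0 ≤ q) (hqp : q ≤ p) {n : ℕ} (hn : n ≠ 0)
    {h h' h'' : ℝ → ℝ} {M x : ℝ} (hx : x ∈ Icc (0 : ℝ) 1)
    (hh : ∀ u ∈ Icc (0 : ℝ) 1, HasDerivAt h (h' u) u)
    (hh' : ∀ u ∈ Icc (0 : ℝ) 1, HasDerivAt h' (h'' u) u) (hM : ∀ u ∈ Icc (0 : ℝ) 1, |h'' u| ≤ M) :
    |pqBernstein p q n h x - h x| ≤ M / 2 * (p ^ (n - 1) / pqInt p q n * (x - x ^ 2)) := by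
  set t := pqNode p q n
  set b := fun k => pqBasis p q n k x
  -- the operator reproduces affine functions, so only the Taylor remainder at `x` survives
  have hremainder : pqBernstein p q n h x - h x =
      ∑ k ∈ range (n + 1), b k * (h (t k) - h x - h' x * (t k - x)) := by
    have hexpand : ∀ k, b k * (h (t k) - h x - h' x * (t k - x)) =
        b k * h (t k) - h x * b k - h' x * (b k * t k) + h' x * x * b k := fun k => by ring
    simp only [hexpand, sum_add_distrib, sum_sub_distrib, ← mul_sum, b, t,
      sum_pqBasis hp hq, sum_pqBasis_mul_pqNode hp hq hn, pqBernstein]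
    ring
  rw [hremainder, ← sum_pqBasis_mul_pqNode_sub_sq hp hq hn, mul_sum]
  refine (abs_sum_mul_le_sum_mul (fun k _ => pqBasis_nonneg hp hq hqp n k hx)
    fun k hk => abs_sub_sub_deriv_mul_le ordConnected_Icc hh hh' hM hx
      (pqNode_mem_Icc hp.le hq (Nat.lt_succ_iff.mp (mem_range.mp hk)))).trans_eq ?_
  exact sum_congr rfl fun _ _ => by ring

end PQBernstein

section PQBernstein2

variable {p₁ q₁ p₂ q₂ : ℝ} {n m : ℕ} {x y : ℝ}

lemma pqBernstein2_eq_pqBernstein (f : ℝ → ℝ → ℝ) :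
    pqBernstein2 p₁ q₁ p₂ q₂ n m f x y =
      pqBernstein p₁ q₁ n (fun u => pqBernstein p₂ q₂ m (f u) y) x := by
  simp only [pqBernstein2, pqBernstein, mul_sum, mul_assoc]

lemma pqBernstein2_sub (f g : ℝ → ℝ → ℝ) :
    pqBernstein2 p₁ q₁ p₂ q₂ n m (fun u v => f u v - g u v) x y =
      pqBernstein2 p₁ q₁ p₂ q₂ n m f x y - pqBernstein2 p₁ q₁ p₂ q₂ n m g x y := by
  simp only [pqBernstein2, mul_sub, sum_sub_distrib]

variable (hp₁ : 0 < p₁) (hq₁ : 0 ≤ q₁) (hqp₁ : q₁ ≤ p₁)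
  (hp₂ : 0 < p₂) (hq₂ : 0 ≤ q₂) (hqp₂ : q₂ ≤ p₂)
  (hx : x ∈ Icc (0 : ℝ) 1) (hy : y ∈ Icc (0 : ℝ) 1)
include hp₁ hq₁ hqp₁ hp₂ hq₂ hqp₂ hx hy

lemma abs_pqBernstein2_le {F : ℝ → ℝ → ℝ} {C : ℝ}
    (hF : ∀ u ∈ Icc (0 : ℝ) 1, ∀ v ∈ Icc (0 : ℝ) 1, |F u v| ≤ C) :
    |pqBernstein2 p₁ q₁ p₂ q₂ n m F x y| ≤ C := by
  rw [pqBernstein2_eq_pqBernstein]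
  exact abs_pqBernstein_le hp₁ hq₁ hqp₁ n hx fun u hu =>
    abs_pqBernstein_le hp₂ hq₂ hqp₂ m hy (hF u hu)

theorem abs_pqBernstein2_sub_le_of_isC2On01 (hn : n ≠ 0) (hm : m ≠ 0) {g : ℝ → ℝ → ℝ}
    (hg : IsC2On01 g) :
    |pqBernstein2 p₁ q₁ p₂ q₂ n m g x y - g x y| ≤
      supNorm2 (pdx (pdx g)) / 2 * (p₁ ^ (n - 1) / pqInt p₁ q₁ n * (x - x ^ 2)) +
        supNorm2 (pdy (pdy g)) / 2 * (p₂ ^ (m - 1) / pqInt p₂ q₂ m * (y - y ^ 2)) := by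
  obtain ⟨-, hd, -, -, hxx, hyy⟩ := hg
  have hinner : ∀ u ∈ Icc (0 : ℝ) 1, |pqBernstein p₂ q₂ m (g u) y - g u y| ≤
      supNorm2 (pdy (pdy g)) / 2 * (p₂ ^ (m - 1) / pqInt p₂ q₂ m * (y - y ^ 2)) := fun u hu =>
    abs_pqBernstein_sub_le hp₂ hq₂ hqp₂ hm hy (fun v hv => (hd u hu v hv).2.2.1.hasDerivAt)
      (fun v hv => (hd u hu v hv).2.2.2.hasDerivAt) fun v hv => abs_le_supNorm2 hyy hu hv
  have houter : |pqBernstein p₁ q₁ n (fun u => g u y) x - g x y| ≤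
      supNorm2 (pdx (pdx g)) / 2 * (p₁ ^ (n - 1) / pqInt p₁ q₁ n * (x - x ^ 2)) :=
    abs_pqBernstein_sub_le hp₁ hq₁ hqp₁ hn hx (fun u hu => (hd u hu y hy).1.hasDerivAt)
      (fun u hu => (hd u hu y hy).2.1.hasDerivAt) fun u hu => abs_le_supNorm2 hxx hu hy
  have hsplit : pqBernstein2 p₁ q₁ p₂ q₂ n m g x y - g x y =
      (pqBernstein p₁ q₁ n (fun u => g u y) x - g x y) +
        pqBernstein p₁ q₁ n (fun u => pqBernstein p₂ q₂ m (g u) y - g u y) x := by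
    rw [pqBernstein2_eq_pqBernstein, pqBernstein_sub]
    ring
  rw [hsplit]
  exact (abs_add_le _ _).trans (add_le_add houter (abs_pqBernstein_le hp₁ hq₁ hqp₁ n hx hinner))

theorem abs_pqBernstein2_sub_le (hn : n ≠ 0) (hm : m ≠ 0) {f g : ℝ → ℝ → ℝ}
    (hf : ContinuousOn (fun z : ℝ × ℝ => f z.1 z.2) (Icc (0 : ℝ) 1 ×ˢ Icc (0 : ℝ) 1))
    (hg : IsC2On01 g) :
    |pqBernstein2 p₁ q₁ p₂ q₂ n m f x y - f x y| ≤
      2 * supNorm2 (fun u v => f u v - g u v) +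
        (supNorm2 (pdx (pdx g)) / 2 * (p₁ ^ (n - 1) / pqInt p₁ q₁ n * (x - x ^ 2)) +
          supNorm2 (pdy (pdy g)) / 2 * (p₂ ^ (m - 1) / pqInt p₂ q₂ m * (y - y ^ 2))) := by
  have hfg : ∀ u ∈ Icc (0 : ℝ) 1, ∀ v ∈ Icc (0 : ℝ) 1,
      |f u v - g u v| ≤ supNorm2 (fun u v => f u v - g u v) := fun u hu v hv =>
    abs_le_supNorm2 (g := fun u v => f u v - g u v) (hf.sub hg.1) hu hv
  have hsplit : pqBernstein2 p₁ q₁ p₂ q₂ n m f x y - f x y =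
      pqBernstein2 p₁ q₁ p₂ q₂ n m (fun u v => f u v - g u v) x y - (f x y - g x y) +
        (pqBernstein2 p₁ q₁ p₂ q₂ n m g x y - g x y) := by
    rw [pqBernstein2_sub]
    ring
  rw [hsplit, two_mul]
  refine (abs_add_le _ _).trans (add_le_add ((abs_sub _ _).trans (add_le_add ?_ (hfg x hx y hy)))
    (abs_pqBernstein2_sub_le_of_isC2On01 hp₁ hq₁ hqp₁ hp₂ hq₂ hqp₂ hx hy hn hm hg))
  exact abs_pqBernstein2_le hp₁ hq₁ hqp₁ hp₂ hq₂ hqp₂ hx hy hfg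

end PQBernstein2

theorem pqBernstein2_rate_peetreK_general (p₁ q₁ p₂ q₂ : ℝ) (n m : ℕ)
    (hq₁ : 0 < q₁) (hq₁p₁ : q₁ < p₁)
    (hq₂ : 0 < q₂) (hq₂p₂ : q₂ < p₂)
    (hn : 1 ≤ n) (hm : 1 ≤ m) (f : ℝ → ℝ → ℝ)
    (hf : ContinuousOn (fun z : ℝ × ℝ => f z.1 z.2)
      (Set.Icc (0 : ℝ) 1 ×ˢ Set.Icc (0 : ℝ) 1))
    (x y : ℝ) (hx : x ∈ Set.Icc (0 : ℝ) 1) (hy : y ∈ Set.Icc (0 : ℝ) 1) :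
    |pqBernstein2 p₁ q₁ p₂ q₂ n m f x y - f x y| ≤
      2 * peetreK f
        ((1 / 2) * max ((p₁ ^ (n - 1) / pqInt p₁ q₁ n) * (x - x ^ 2))
          ((p₂ ^ (m - 1) / pqInt p₂ q₂ m) * (y - y ^ 2)) / 2) := by
  set δ₁ := p₁ ^ (n - 1) / pqInt p₁ q₁ n * (x - x ^ 2)
  set δ₂ := p₂ ^ (m - 1) / pqInt p₂ q₂ m * (y - y ^ 2)
  have hp₁ : 0 < p₁ := hq₁.trans hq₁p₁
  have hδ₁ : 0 ≤ δ₁ := mul_nonneg (div_nonneg (pow_nonneg hp₁.le _)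
    (pqInt_nonneg hp₁.le hq₁.le n)) (by nlinarith [hx.1, hx.2])
  rw [← div_le_iff₀' two_pos]
  refine le_peetreK fun g hg => ?_
  have hbound := abs_pqBernstein2_sub_le hp₁ hq₁.le hq₁p₁.le (hq₂.trans hq₂p₂) hq₂.le hq₂p₂.le
    hx hy (Nat.one_le_iff_ne_zero.mp hn) (Nat.one_le_iff_ne_zero.mp hm) hf hg
  have h₁ := mul_le_mul_of_nonneg_left (le_max_left δ₁ δ₂) (supNorm2_nonneg (pdx (pdx g)))
  have h₂ := mul_le_mul_of_nonneg_left (le_max_right δ₁ δ₂) (supNorm2_nonneg (pdy (pdy g)))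
  have hC := mul_le_mul_of_nonneg_left (supNorm2_pdx_pdx_add_supNorm2_pdy_pdy_le_C2Norm g)
    (hδ₁.trans (le_max_left δ₁ δ₂))
  linarith

theorem pqBernstein2_rate_peetreK (p₁ q₁ p₂ q₂ : ℝ) (n m : ℕ)
    (hq₁ : 0 < q₁) (hq₁p₁ : q₁ < p₁) (hp₁ : p₁ ≤ 1)
    (hq₂ : 0 < q₂) (hq₂p₂ : q₂ < p₂) (hp₂ : p₂ ≤ 1)
    (hn : 1 ≤ n) (hm : 1 ≤ m) (f : ℝ → ℝ → ℝ)
    (hf : ContinuousOn (fun z : ℝ × ℝ => f z.1 z.2)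
      (Set.Icc (0 : ℝ) 1 ×ˢ Set.Icc (0 : ℝ) 1))
    (x y : ℝ) (hx : x ∈ Set.Icc (0 : ℝ) 1) (hy : y ∈ Set.Icc (0 : ℝ) 1) :
    |pqBernstein2 p₁ q₁ p₂ q₂ n m f x y - f x y| ≤
      2 * peetreK f
        ((1 / 2) * max ((p₁ ^ (n - 1) / pqInt p₁ q₁ n) * (x - x ^ 2))
          ((p₂ ^ (m - 1) / pqInt p₂ q₂ m) * (y - y ^ 2)) / 2) :=
  pqBernstein2_rate_peetreK_general p₁ q₁ p₂ q₂ n m hq₁ hq₁p₁ hq₂ hq₂p₂ hn hm f hf x y hx hy
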